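/- For a bivariate standard normal pair (X, Y) with correlation ρ ∈ [-1, 1] and any t > 1, |P(X > t, Y > t) - P(X > t)P(Y > t)| ≤ C|ρ|e^{-t²/2} for an absolute constant C. -/

import Mathlib

open MeasureTheory ProbabilityTheory

noncomputable def stdNormalCDF (x : ℝ) : ℝ :=
  ∫ t in Set.Iic x, (Real.sqrt (2 * Real.pi))⁻¹ * Real.exp (-(t ^ 2) / 2)

/-- The joint law of a bivariate standard normal pair with correlation ρ,
    realized as the pushforward of two independent standard normals under
    (z₁, z₂) ↦ (z₁, ρ z₁ + √(1-ρ²) z₂). -/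
noncomputable def bivariateStdNormal (ρ : ℝ) : Measure (ℝ × ℝ) :=
  Measure.map (fun z : ℝ × ℝ => (z.1, ρ * z.1 + Real.sqrt (1 - ρ ^ 2) * z.2))
    ((gaussianReal 0 1).prod (gaussianReal 0 1))

/-! Write `Y = ρ X + √(1 - ρ²) Z` with `Z` standard normal and independent of `X`.
For `|ρ| ≤ 1/2`, conditioning on `X` gives `P(X > t, Y > t) = E[Φ̄((t - ρ X) / √(1 - ρ²)); X > t]`;
the tail `Φ̄` is `1/2`-Lipschitz and its argument is within `2 |ρ| X` of `t`, so the covariance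
is at most `|ρ| E[X; X > t] = |ρ| φ(t)`. For `|ρ| > 1/2` both probabilities lie in `[0, Φ̄(t)]`,
and the Mills bound `Φ̄(t) ≤ φ(t) / t ≤ φ(t)` suffices. -/

open Real Set Filter Topology

lemma gaussianPDFReal_zero_one (x : ℝ) :
    gaussianPDFReal 0 1 x = (√(2 * π))⁻¹ * exp (-x ^ 2 / 2) := by
  rw [gaussianPDFReal]
  norm_num

lemma inv_sqrt_two_pi_le_half : (√(2 * π))⁻¹ ≤ 1 / 2 := by
  have : (2 : ℝ) ≤ √(2 * π) := by
    rw [Real.le_sqrt (by norm_num) (by positivity)]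
    nlinarith [pi_gt_three]
  rw [one_div]
  exact inv_anti₀ (by norm_num) this

lemma gaussianPDFReal_zero_one_le_half_mul_exp (x : ℝ) :
    gaussianPDFReal 0 1 x ≤ 1 / 2 * exp (-x ^ 2 / 2) := by
  rw [gaussianPDFReal_zero_one]
  exact mul_le_mul_of_nonneg_right inv_sqrt_two_pi_le_half (exp_pos _).le

lemma gaussianPDFReal_zero_one_le_half (x : ℝ) : gaussianPDFReal 0 1 x ≤ 1 / 2 := by
  refine (gaussianPDFReal_zero_one_le_half_mul_exp x).trans ?_
  have : exp (-x ^ 2 / 2) ≤ 1 := exp_le_one_iff.mpr (by nlinarith [sq_nonneg x])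
  linarith

lemma hasDerivAt_gaussianPDFReal_zero_one (x : ℝ) :
    HasDerivAt (gaussianPDFReal 0 1) (-x * gaussianPDFReal 0 1 x) x := by
  simp_rw [funext gaussianPDFReal_zero_one]
  have hexp := ((((hasDerivAt_id x).pow 2).neg.div_const 2).exp).const_mul (√(2 * π))⁻¹
  refine hexp.congr_deriv ?_
  simp only [Pi.neg_apply, Pi.pow_apply, id]
  ring

lemma tendsto_gaussianPDFReal_zero_one_atTop : Tendsto (gaussianPDFReal 0 1) atTop (𝓝 0) := by
  simp_rw [funext gaussianPDFReal_zero_one]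
  have : Tendsto (fun x : ℝ => -x ^ 2 / 2) atTop atBot :=
    (tendsto_neg_atBot_iff.mpr (tendsto_pow_atTop two_ne_zero)).atBot_div_const two_pos
  simpa using (tendsto_exp_atBot.comp this).const_mul (√(2 * π))⁻¹

lemma integrable_mul_gaussianPDFReal_zero_one :
    Integrable (fun x => x * gaussianPDFReal 0 1 x) := by
  simp_rw [gaussianPDFReal_zero_one]
  convert (integrable_mul_exp_neg_mul_sq one_half_pos).mul_const (√(2 * π))⁻¹ using 2
  rename_i y
  rw [show -(1 / 2) * y ^ 2 = -y ^ 2 / 2 by ring]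
  ring

lemma setIntegral_Ioi_id_gaussianReal (t : ℝ) :
    ∫ x in Ioi t, x ∂gaussianReal 0 1 = gaussianPDFReal 0 1 t := by
  rw [gaussianReal_of_var_ne_zero 0 one_ne_zero, setIntegral_withDensity_eq_setIntegral_toReal_smul
    (measurable_gaussianPDF 0 1) (ae_of_all _ fun _ ↦ gaussianPDF_lt_top) _ measurableSet_Ioi]
  have hFTC := integral_Ioi_of_hasDerivAt_of_tendsto
    (hasDerivAt_gaussianPDFReal_zero_one t).continuousAt.continuousWithinAt
    (fun x _ => hasDerivAt_gaussianPDFReal_zero_one x)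
    (by simpa using integrable_mul_gaussianPDFReal_zero_one.neg.integrableOn)
    tendsto_gaussianPDFReal_zero_one_atTop
  simp only [toReal_gaussianPDF, smul_eq_mul, neg_mul, integral_neg, zero_sub, neg_inj] at hFTC ⊢
  simpa only [mul_comm] using hFTC

lemma measureReal_gaussianReal_zero_one (s : Set ℝ) :
    (gaussianReal 0 1).real s = ∫ x in s, gaussianPDFReal 0 1 x := by
  rw [measureReal_def, gaussianReal_apply_eq_integral 0 one_ne_zero,
    ENNReal.toReal_ofReal (integral_nonneg (gaussianPDFReal_nonneg 0 1))]

noncomputable def stdGaussianTail (a : ℝ) : ℝ := (gaussianReal 0 1).real (Ioi a)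

lemma one_sub_stdNormalCDF (t : ℝ) : 1 - stdNormalCDF t = stdGaussianTail t := by
  have hcdf : stdNormalCDF t = (gaussianReal 0 1).real (Iic t) := by
    simp only [measureReal_gaussianReal_zero_one, stdNormalCDF, gaussianPDFReal_zero_one]
  rw [hcdf, stdGaussianTail, ← compl_Iic, probReal_compl_eq_one_sub measurableSet_Iic]

lemma stdGaussianTail_antitone : Antitone stdGaussianTail :=
  fun _ _ hab => measureReal_mono (Ioi_subset_Ioi hab)

lemma stdGaussianTail_sub_le {a b : ℝ} (hab : a ≤ b) :
    stdGaussianTail a - stdGaussianTail b ≤ (b - a) / 2 := by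
  calc stdGaussianTail a - stdGaussianTail b = ∫ x in Ioc a b, gaussianPDFReal 0 1 x := by
        rw [stdGaussianTail, stdGaussianTail, ← measureReal_sdiff (Ioi_subset_Ioi hab)
          measurableSet_Ioi, Ioi_sdiff_Ioi, measureReal_gaussianReal_zero_one]
    _ ≤ ‖∫ x in Ioc a b, gaussianPDFReal 0 1 x‖ := le_norm_self _
    _ ≤ 1 / 2 * volume.real (Ioc a b) :=
        norm_setIntegral_le_of_norm_le_const measure_Ioc_lt_top fun x _ =>
          (norm_of_nonneg (gaussianPDFReal_nonneg 0 1 x)).trans_le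
            (gaussianPDFReal_zero_one_le_half x)
    _ = (b - a) / 2 := by rw [volume_real_Ioc_of_le hab]; ring

lemma abs_stdGaussianTail_sub_le (a b : ℝ) :
    |stdGaussianTail a - stdGaussianTail b| ≤ |a - b| / 2 := by
  rcases le_total a b with hab | hba
  · rw [abs_of_nonneg (sub_nonneg.mpr (stdGaussianTail_antitone hab)),
      abs_of_nonpos (sub_nonpos.mpr hab)]
    linarith [stdGaussianTail_sub_le hab]
  · rw [abs_of_nonpos (sub_nonpos.mpr (stdGaussianTail_antitone hba)),
      abs_of_nonneg (sub_nonneg.mpr hba)]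
    linarith [stdGaussianTail_sub_le hba]

lemma stdGaussianTail_le_gaussianPDFReal_div {t : ℝ} (ht : 0 < t) :
    stdGaussianTail t ≤ gaussianPDFReal 0 1 t / t := by
  rw [le_div_iff₀ ht, ← setIntegral_Ioi_id_gaussianReal, stdGaussianTail, ← smul_eq_mul,
    ← setIntegral_const]
  exact setIntegral_mono_on (integrable_const t)
    ((memLp_id_gaussianReal 1).integrable le_rfl).integrableOn measurableSet_Ioi fun x hx => hx.le

instance (ρ : ℝ) : IsProbabilityMeasure (bivariateStdNormal ρ) :=
  Measure.isProbabilityMeasure_map (by fun_prop)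

lemma bivariateStdNormal_map_fst (ρ : ℝ) :
    (bivariateStdNormal ρ).map Prod.fst = gaussianReal 0 1 := by
  rw [bivariateStdNormal, Measure.map_map measurable_fst (by fun_prop)]
  exact Measure.map_fst_prod.trans (by simp)

lemma bivariateStdNormal_real_prod_Ioi {ρ : ℝ} (hρ : |ρ| < 1) {s : Set ℝ}
    (hs : MeasurableSet s) (u : ℝ) : (bivariateStdNormal ρ).real (s ×ˢ Ioi u) =
      ∫ x in s, stdGaussianTail ((u - ρ * x) / √(1 - ρ ^ 2)) ∂gaussianReal 0 1 := by
  set c := √(1 - ρ ^ 2)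
  have hc : 0 < c := sqrt_pos.mpr (by nlinarith [sq_abs ρ, abs_nonneg ρ])
  set f := fun z : ℝ × ℝ => (z.1, ρ * z.1 + c * z.2)
  have hf : Measurable f := by fun_prop
  have hslice (x : ℝ) : gaussianReal 0 1 (Prod.mk x ⁻¹' (f ⁻¹' (s ×ˢ Ioi u))) =
      s.indicator (fun x => gaussianReal 0 1 (Ioi ((u - ρ * x) / c))) x := by
    by_cases hx : x ∈ s
    · rw [indicator_of_mem hx]
      congr 1
      ext y
      simp only [mem_preimage, mem_prod, hx, mem_Ioi, true_and, div_lt_iff₀ hc, f]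
      constructor <;> intro h <;> linarith
    · rw [indicator_of_notMem hx, ← measure_empty (μ := gaussianReal 0 1)]
      congr 1
      ext y
      simp [f, hx]
  rw [measureReal_def, bivariateStdNormal, Measure.map_apply hf (hs.prod measurableSet_Ioi),
    Measure.prod_apply (hf (hs.prod measurableSet_Ioi)), lintegral_congr hslice,
    lintegral_indicator hs, ← integral_toReal]
  · rfl
  · exact ((Antitone.measurable fun _ _ h => measure_mono (Ioi_subset_Ioi h)).comp
      (by fun_prop)).aemeasurable
  · exact ae_of_all _ fun _ => measure_lt_top _ _

lemma abs_div_sqrt_one_sub_sq_sub_le {ρ t x : ℝ} (hρ : |ρ| ≤ 1 / 2) (ht : 0 ≤ t)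
    (hx : t ≤ x) :
    |(t - ρ * x) / √(1 - ρ ^ 2) - t| ≤ 2 * |ρ| * x := by
  set c := √(1 - ρ ^ 2)
  have hρ2 : ρ ^ 2 ≤ |ρ| / 2 := by rw [← sq_abs]; nlinarith [abs_nonneg ρ]
  have hc2 : c ^ 2 = 1 - ρ ^ 2 := sq_sqrt (by nlinarith)
  have hc : 3 / 4 ≤ c := by nlinarith [sqrt_nonneg (1 - ρ ^ 2)]
  have hc1 : 1 - c ≤ ρ ^ 2 := by nlinarith
  have hc0 : 0 < c := by linarith
  have hx0 : 0 ≤ x := ht.trans hx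
  have hρx : |ρ * x| ≤ |ρ| * x := by rw [abs_mul, abs_of_nonneg hx0]
  have hshift : 0 ≤ t * (1 - c) ∧ t * (1 - c) ≤ |ρ| * x / 2 := by
    constructor <;> nlinarith [mul_le_mul_of_nonneg_left hc1 ht, sq_nonneg ρ]
  have hscale : 3 / 2 * (|ρ| * x) ≤ 2 * |ρ| * x * c := by
    nlinarith [mul_nonneg (abs_nonneg ρ) hx0]
  rw [div_sub' hc0.ne', abs_div, abs_of_pos hc0, div_le_iff₀ hc0, abs_le]
  constructor <;> linarith [abs_le.mp hρx]

lemma abs_bivariateStdNormal_real_Ioi_prod_Ioi_sub_le {ρ t : ℝ} (hρ : |ρ| ≤ 1 / 2)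
    (ht : 0 ≤ t) :
    |(bivariateStdNormal ρ).real (Ioi t ×ˢ Ioi t) - stdGaussianTail t * stdGaussianTail t| ≤
      |ρ| * gaussianPDFReal 0 1 t := by
  have hint : Integrable (fun x => stdGaussianTail ((t - ρ * x) / √(1 - ρ ^ 2)))
      ((gaussianReal 0 1).restrict (Ioi t)) :=
    .of_bound (stdGaussianTail_antitone.measurable.comp (by fun_prop)).aestronglyMeasurable 1
      (ae_of_all _ fun _ => (norm_of_nonneg measureReal_nonneg).trans_le measureReal_le_one)
  rw [bivariateStdNormal_real_prod_Ioi (by linarith) measurableSet_Ioi, ← smul_eq_mul,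
    stdGaussianTail, ← setIntegral_const, ← integral_sub hint (integrable_const _),
    ← setIntegral_Ioi_id_gaussianReal, ← integral_const_mul, ← Real.norm_eq_abs]
  refine norm_integral_le_of_norm_le
    (((memLp_id_gaussianReal 1).integrable le_rfl).integrableOn.const_mul |ρ|)
    (ae_restrict_of_forall_mem measurableSet_Ioi fun x hx => ?_)
  calc _ ≤ |(t - ρ * x) / √(1 - ρ ^ 2) - t| / 2 := abs_stdGaussianTail_sub_le _ _
    _ ≤ 2 * |ρ| * x / 2 := by gcongr; exact abs_div_sqrt_one_sub_sq_sub_le hρ ht (le_of_lt hx)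
    _ = |ρ| * x := by ring

lemma abs_bivariateStdNormal_real_Ioi_prod_Ioi_sub_le_stdGaussianTail (ρ t : ℝ) :
    |(bivariateStdNormal ρ).real (Ioi t ×ˢ Ioi t) - stdGaussianTail t * stdGaussianTail t| ≤
      stdGaussianTail t := by
  have hP : (bivariateStdNormal ρ).real (Ioi t ×ˢ Ioi t) ≤ stdGaussianTail t := by
    rw [stdGaussianTail, ← bivariateStdNormal_map_fst ρ,
      map_measureReal_apply measurable_fst measurableSet_Ioi]
    exact measureReal_mono fun q hq => hq.1
  have hP₀ : 0 ≤ (bivariateStdNormal ρ).real (Ioi t ×ˢ Ioi t) := measureReal_nonneg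
  have hT₀ : 0 ≤ stdGaussianTail t := measureReal_nonneg
  have hT₁ : stdGaussianTail t ≤ 1 := measureReal_le_one
  rw [abs_le]
  constructor <;> nlinarith

/-- For a bivariate standard normal pair with correlation ρ ∈ [-1,1] and t > 1,
    |P(X > t, Y > t) - P(X > t) P(Y > t)| ≤ C |ρ| e^{-t²/2}. -/
theorem bivariate_covariance_bound :
    ∃ C : ℝ, 0 < C ∧ ∀ ρ t : ℝ, -1 ≤ ρ → ρ ≤ 1 → 1 < t →
      |((bivariateStdNormal ρ) {q : ℝ × ℝ | t < q.1 ∧ t < q.2}).toReal -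
          (1 - stdNormalCDF t) * (1 - stdNormalCDF t)| ≤
        C * |ρ| * Real.exp (-t ^ 2 / 2) := by
  refine ⟨1, one_pos, fun ρ t _ _ ht => ?_⟩
  have hpdf := gaussianPDFReal_zero_one_le_half_mul_exp t
  have hexp := exp_pos (-t ^ 2 / 2)
  rw [← measureReal_def, one_sub_stdNormalCDF,
    show {q : ℝ × ℝ | t < q.1 ∧ t < q.2} = Ioi t ×ˢ Ioi t from rfl]
  rcases le_or_gt |ρ| (1 / 2) with hρ | hρ
  · calc _ ≤ |ρ| * gaussianPDFReal 0 1 t :=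
          abs_bivariateStdNormal_real_Ioi_prod_Ioi_sub_le hρ (by linarith)
      _ ≤ 1 * |ρ| * exp (-t ^ 2 / 2) := by nlinarith [abs_nonneg ρ]
  · calc _ ≤ stdGaussianTail t :=
          abs_bivariateStdNormal_real_Ioi_prod_Ioi_sub_le_stdGaussianTail ρ t
      _ ≤ gaussianPDFReal 0 1 t / t := stdGaussianTail_le_gaussianPDFReal_div (by linarith)
      _ ≤ gaussianPDFReal 0 1 t := div_le_self (gaussianPDFReal_nonneg 0 1 t) ht.le
      _ ≤ 1 * |ρ| * exp (-t ^ 2 / 2) := by nlinarith
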